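/- For n ≥ 2, the number of permutations π of {1,...,n} with first entry π_1 ≠ n equals (n-1)·(n-1)!, and each such permutation contains exactly one pair (i, j) where π_j = n and π_i is the largest entry preceding position j; consequently the generating polynomial for this statistic over S_n is (n-1)! + q·(n-1)·(n-1)!. -/

import Mathlib

set_option maxHeartbeats 400000

/-- The statistic on permutations of `Fin n` (`2 ≤ n`) counting pairs `(i,j)`
with `i < j`, `π j = n` (the maximum value), and `π i` the largest entry
preceding position `j`. -/
def stat45 {n : ℕ} (hn : 2 ≤ n) (π : Equiv.Perm (Fin n)) : ℕ :=
  (Finset.univ.filter fun p : Fin n × Fin n =>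
    p.1 < p.2 ∧ π p.2 = ⟨n - 1, by omega⟩ ∧
      ∀ m : Fin n, m < p.2 → π m ≤ π p.1).card

lemma count_eval (m : ℕ) (b : Fin (m + 1)) :
    (Finset.univ.filter fun π : Equiv.Perm (Fin (m + 1)) =>
      π ⟨0, Nat.succ_pos m⟩ = b).card = m.factorial := by
  have h0 : (⟨0, Nat.succ_pos m⟩ : Fin (m + 1)) = 0 :=
    Fin.ext (Fin.val_zero (m + 1)).symm
  simp only [h0]
  have hcard : (Finset.univ.filter
      fun x : Fin (m + 1) × Equiv.Perm (Fin m) => x.1 = b).card = m.factorial := by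
    have heq : (Finset.univ.filter
        fun x : Fin (m + 1) × Equiv.Perm (Fin m) => x.1 = b)
        = {b} ×ˢ Finset.univ := by
      ext x
      rw [Finset.mem_filter, Finset.mem_product]
      simp
    rw [heq, Finset.card_product, Finset.card_singleton, one_mul,
      Finset.card_univ, Fintype.card_perm, Fintype.card_fin]
  rw [← hcard]
  apply Finset.card_equiv (Equiv.Perm.decomposeFin)
  intro π
  simp only [Finset.mem_filter, Finset.mem_univ, true_and]
  have hkey : π 0 = (Equiv.Perm.decomposeFin π).1 := by
    have := Equiv.Perm.decomposeFin_symm_apply_zero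
      (Equiv.Perm.decomposeFin π).1 (Equiv.Perm.decomposeFin π).2
    rw [Prod.mk.eta, Equiv.symm_apply_apply] at this
    exact this
  rw [hkey]

lemma stat45_eq_one {n : ℕ} (hn : 2 ≤ n) (π : Equiv.Perm (Fin n))
    (h : π ⟨0, Nat.lt_of_lt_of_le Nat.zero_lt_two hn⟩ ≠ ⟨n - 1, by omega⟩) : stat45 hn π = 1 := by
  set top : Fin n := ⟨n - 1, by omega⟩ with htop
  set j : Fin n := π⁻¹ top with hj
  have hπj : π j = top := by simp [hj]
  have hj0 : (⟨0, by omega⟩ : Fin n) < j := by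
    rcases Nat.eq_zero_or_pos j.1 with h0 | h0
    · exfalso
      apply h
      rw [← hπj]
      congr 1
      exact Fin.ext h0.symm
    · exact h0
  obtain ⟨i₀, hi₀mem, hi₀max⟩ := Finset.exists_max_image
    (Finset.univ.filter fun m : Fin n => m < j) (fun m => π m)
    ⟨⟨0, by omega⟩, by simpa using hj0⟩
  simp only [Finset.mem_filter, Finset.mem_univ, true_and] at hi₀mem
  rw [stat45, Finset.card_eq_one]
  refine ⟨(i₀, j), Finset.eq_singleton_iff_unique_mem.mpr ⟨?_, ?_⟩⟩
  · simp only [Finset.mem_filter, Finset.mem_univ, true_and]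
    exact ⟨hi₀mem, hπj, fun m hm => hi₀max m (by simpa using hm)⟩
  · rintro ⟨a, b⟩ hab
    simp only [Finset.mem_filter, Finset.mem_univ, true_and] at hab
    obtain ⟨hab1, hab2, hab3⟩ := hab
    have hb : b = j := by
      apply π.injective
      rw [hab2, hπj]
    subst hb
    have ha : a = i₀ := by
      apply π.injective
      have h1 : π i₀ ≤ π a := hab3 i₀ hi₀mem
      have h2 : π a ≤ π i₀ := hi₀max a (by simpa using hab1)
      exact le_antisymm h2 h1
    simp [ha]

lemma stat45_eq_zero {n : ℕ} (hn : 2 ≤ n) (π : Equiv.Perm (Fin n))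
    (h : π ⟨0, Nat.lt_of_lt_of_le Nat.zero_lt_two hn⟩ = ⟨n - 1, by omega⟩) : stat45 hn π = 0 := by
  rw [stat45, Finset.card_eq_zero]
  ext ⟨a, b⟩
  simp only [Finset.mem_filter, Finset.mem_univ, true_and, Finset.notMem_empty,
    iff_false, not_and]
  intro hab1 hab2
  exfalso
  have hb : b = ⟨0, by omega⟩ := π.injective (by rw [hab2, h])
  rw [hb] at hab1
  exact absurd hab1 (by simp [Fin.lt_def])

/-- For `n ≥ 2`: the number of permutations with first entry `≠ n` is
`(n-1)·(n-1)!`; each such permutation has exactly one pair counted by `stat45`;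
consequently `∑_{π ∈ S_n} q^{stat45 π} = (n-1)! + q·(n-1)·(n-1)!`. -/
theorem class45_distribution (n : ℕ) (hn : 2 ≤ n) :
    (Finset.univ.filter fun π : Equiv.Perm (Fin n) =>
        π ⟨0, by omega⟩ ≠ ⟨n - 1, by omega⟩).card = (n - 1) * (n - 1).factorial ∧
    (∀ π : Equiv.Perm (Fin n),
        π ⟨0, by omega⟩ ≠ ⟨n - 1, by omega⟩ → stat45 hn π = 1) ∧
    (∑ π : Equiv.Perm (Fin n), (Polynomial.X : Polynomial ℚ) ^ stat45 hn π) =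
      Polynomial.C (((n - 1).factorial : ℚ)) +
        Polynomial.X * Polynomial.C ((((n - 1) * (n - 1).factorial : ℕ) : ℚ)) := by
  obtain ⟨m, rfl⟩ : ∃ m, n = m + 1 := ⟨n - 1, by omega⟩
  -- clean versions of the two positions
  have hEq : (Finset.univ.filter fun π : Equiv.Perm (Fin (m + 1)) =>
      π ⟨0, Nat.succ_pos m⟩ = ⟨m, Nat.lt_succ_self m⟩).card = m.factorial :=
    count_eval m ⟨m, Nat.lt_succ_self m⟩
  have htot : (Finset.univ : Finset (Equiv.Perm (Fin (m + 1)))).card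
      = (m + 1).factorial := by
    rw [Finset.card_univ, Fintype.card_perm, Fintype.card_fin]
  have h1 := Finset.card_filter_add_card_filter_not
    (s := (Finset.univ : Finset (Equiv.Perm (Fin (m + 1)))))
    (p := fun π : Equiv.Perm (Fin (m + 1)) =>
      π ⟨0, Nat.succ_pos m⟩ = ⟨m, Nat.lt_succ_self m⟩)
  have hbr : (Finset.univ.filter fun π : Equiv.Perm (Fin (m + 1)) =>
      ¬ π ⟨0, Nat.succ_pos m⟩ = ⟨m, Nat.lt_succ_self m⟩)
      = (Finset.univ.filter fun π : Equiv.Perm (Fin (m + 1)) =>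
      π ⟨0, Nat.succ_pos m⟩ ≠ ⟨m, Nat.lt_succ_self m⟩) := rfl
  rw [hbr, hEq, htot] at h1
  have hmul : (m + 1).factorial = m * m.factorial + m.factorial := by
    rw [Nat.factorial_succ, Nat.succ_mul]
  have hNe : (Finset.univ.filter fun π : Equiv.Perm (Fin (m + 1)) =>
      π ⟨0, Nat.succ_pos m⟩ ≠ ⟨m, Nat.lt_succ_self m⟩).card = m * m.factorial := by
    omega
  refine ⟨hNe, fun π hπ => stat45_eq_one hn π hπ, ?_⟩
  have hs1 : ∀ π ∈ Finset.univ.filter (fun π : Equiv.Perm (Fin (m + 1)) =>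
      π ⟨0, Nat.succ_pos m⟩ ≠ ⟨m, Nat.lt_succ_self m⟩),
      (Polynomial.X : Polynomial ℚ) ^ stat45 hn π = Polynomial.X := by
    intro π hπ
    simp only [Finset.mem_filter, Finset.mem_univ, true_and] at hπ
    rw [stat45_eq_one hn π hπ, pow_one]
  have hs2 : ∀ π ∈ Finset.univ.filter (fun π : Equiv.Perm (Fin (m + 1)) =>
      ¬ π ⟨0, Nat.succ_pos m⟩ ≠ ⟨m, Nat.lt_succ_self m⟩),
      (Polynomial.X : Polynomial ℚ) ^ stat45 hn π = 1 := by
    intro π hπ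
    simp only [Finset.mem_filter, Finset.mem_univ, true_and, not_not] at hπ
    rw [stat45_eq_zero hn π hπ, pow_zero]
  have hNN : (Finset.univ.filter fun π : Equiv.Perm (Fin (m + 1)) =>
      ¬ π ⟨0, Nat.succ_pos m⟩ ≠ ⟨m, Nat.lt_succ_self m⟩).card = m.factorial := by
    rw [← hEq]
    congr 1
    ext π
    simp only [Finset.mem_filter, Finset.mem_univ, true_and, not_not]
  have hsum : (∑ π : Equiv.Perm (Fin (m + 1)),
      (Polynomial.X : Polynomial ℚ) ^ stat45 hn π)
      = Polynomial.C ((m.factorial : ℚ)) +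
        Polynomial.X * Polynomial.C (((m * m.factorial : ℕ) : ℚ)) := by
    calc (∑ π : Equiv.Perm (Fin (m + 1)),
        (Polynomial.X : Polynomial ℚ) ^ stat45 hn π)
        = (∑ π ∈ Finset.univ.filter (fun π : Equiv.Perm (Fin (m + 1)) =>
            π ⟨0, Nat.succ_pos m⟩ ≠ ⟨m, Nat.lt_succ_self m⟩),
            (Polynomial.X : Polynomial ℚ) ^ stat45 hn π) +
          (∑ π ∈ Finset.univ.filter (fun π : Equiv.Perm (Fin (m + 1)) =>
            ¬ π ⟨0, Nat.succ_pos m⟩ ≠ ⟨m, Nat.lt_succ_self m⟩),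
            (Polynomial.X : Polynomial ℚ) ^ stat45 hn π) :=
        (Finset.sum_filter_add_sum_filter_not _ _ _).symm
      _ = (∑ _π ∈ Finset.univ.filter (fun π : Equiv.Perm (Fin (m + 1)) =>
            π ⟨0, Nat.succ_pos m⟩ ≠ ⟨m, Nat.lt_succ_self m⟩),
            (Polynomial.X : Polynomial ℚ)) +
          (∑ _π ∈ Finset.univ.filter (fun π : Equiv.Perm (Fin (m + 1)) =>
            ¬ π ⟨0, Nat.succ_pos m⟩ ≠ ⟨m, Nat.lt_succ_self m⟩),
            (1 : Polynomial ℚ)) :=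
        congrArg₂ (· + ·) (Finset.sum_congr rfl hs1) (Finset.sum_congr rfl hs2)
      _ = (Finset.univ.filter (fun π : Equiv.Perm (Fin (m + 1)) =>
            π ⟨0, Nat.succ_pos m⟩ ≠ ⟨m, Nat.lt_succ_self m⟩)).card •
              (Polynomial.X : Polynomial ℚ) +
          (Finset.univ.filter (fun π : Equiv.Perm (Fin (m + 1)) =>
            ¬ π ⟨0, Nat.succ_pos m⟩ ≠ ⟨m, Nat.lt_succ_self m⟩)).card •
              (1 : Polynomial ℚ) :=
        congrArg₂ (· + ·) (Finset.sum_const _) (Finset.sum_const _)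
      _ = (m * m.factorial) • (Polynomial.X : Polynomial ℚ) +
            m.factorial • (1 : Polynomial ℚ) := by
        exact congrArg₂ (· + ·)
          (congrArg (· • (Polynomial.X : Polynomial ℚ)) hNe)
          (congrArg (· • (1 : Polynomial ℚ)) hNN)
      _ = Polynomial.C ((m.factorial : ℚ)) +
            Polynomial.X * Polynomial.C (((m * m.factorial : ℕ) : ℚ)) := by
        simp only [nsmul_eq_mul, mul_one, Polynomial.C_eq_natCast]
        push_cast
        ring
  exact hsum
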